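/- arXiv:2007.14483 — 2 statements merged into one kernel-verified Lean document; each statement's English description precedes it below -/
import Mathlib

section
/- In a commutative idempotent involutive residuated lattice, for every element x, the element 0_x := x ∧ ¬x equals x · ¬x. -/
/-- A commutative idempotent involutive residuated lattice. -/
class CIdInRL (α : Type*) extends Lattice α, CommMonoid α, Zero α where
  arrow : α → α → α
  residuation : ∀ x y z : α, x * y ≤ z ↔ y ≤ arrow x z
  idem : ∀ x : α, x * x = x
  involutive : ∀ x : α, arrow (arrow x 0) 0 = x

namespace CIdInRL
variable {α : Type*} [CIdInRL α]
/-- linear negation ¬x := x → 0 -/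
def neg (x : α) : α := arrow x 0
/-- 0_x := x ∧ ¬x -/
def zx (x : α) : α := x ⊓ neg x
/-- 1_x := x ∨ ¬x -/
def ox (x : α) : α := x ⊔ neg x
/-- monoidal order x ⊑ y iff x·y = x -/
def mleq (x y : α) : Prop := x * y = x
end CIdInRL

/-!
Idempotence gives `x ⊓ y = (x ⊓ y) * (x ⊓ y) ≤ x * y`. Conversely `x * ¬x ≤ 0`, and since
`x * (x * ¬x) = x * ¬x` this puts `x * ¬x` below `¬x` and, symmetrically, below `¬¬x = x`.
-/

namespace CIdInRL

variable {α : Type*} [CIdInRL α]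

lemma le_neg_iff_mul_le_zero {x y : α} : y ≤ neg x ↔ x * y ≤ 0 :=
  (residuation x y 0).symm

lemma neg_neg (x : α) : neg (neg x) = x :=
  involutive x

lemma mul_monotone (x : α) : Monotone (x * ·) := fun _ _ h =>
  (residuation _ _ _).mpr (h.trans ((residuation _ _ _).mp le_rfl))

lemma inf_le_mul (x y : α) : x ⊓ y ≤ x * y :=
  calc x ⊓ y = (x ⊓ y) * (x ⊓ y) := (idem _).symm
    _ ≤ (x ⊓ y) * x := mul_monotone _ inf_le_left
    _ = x * (x ⊓ y) := mul_comm _ _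
    _ ≤ x * y := mul_monotone x inf_le_right

lemma mul_neg_self_le_zero (x : α) : x * neg x ≤ 0 :=
  le_neg_iff_mul_le_zero.mp le_rfl

lemma mul_le_neg_left {x y : α} (h : x * y ≤ 0) : x * y ≤ neg x :=
  le_neg_iff_mul_le_zero.mpr (by rwa [← mul_assoc, idem])

lemma mul_le_neg_right {x y : α} (h : x * y ≤ 0) : x * y ≤ neg y :=
  mul_comm y x ▸ mul_le_neg_left (mul_comm x y ▸ h)

end CIdInRL

open CIdInRL in
theorem stmt0 {α : Type*} [CIdInRL α] (x : α) : x ⊓ neg x = x * neg x := by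
  have h := mul_neg_self_le_zero x
  have le_x : x * neg x ≤ x := (mul_le_neg_right h).trans_eq (neg_neg x)
  exact le_antisymm (inf_le_mul x (neg x)) (le_inf le_x (mul_le_neg_left h))
end

section
/- In a commutative idempotent involutive residuated lattice, for every x, the interval B_x := {y | 0_x ⊑ y ⊑ 1_x} is closed under negation: if y ∈ B_x then ¬y ∈ B_x. -/
/-!
Since `0_x ≤ 0` and `0_x · y = 0_x`, we get `0_x · ¬y = 0_x · (y · ¬y) ≤ 0_x` and `0_x ≤ ¬y`,
so `0_x ⊑ ¬y`. Applied once more, this gives `0_x ≤ ¬¬y = y`, hence `¬y ≤ ¬0_x = 1_x`.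
Finally `a · b ≤ a` and `¬a · b ≤ ¬a` both say `a · ¬a · b ≤ 0`, so `y · 1_x = y`
yields `¬y · 1_x ≤ ¬y`.
-/

namespace CIdInRL

variable {α : Type*} [CIdInRL α] {a b : α}

theorem le_neg_iff_mul_le_zero_s4 : a ≤ neg b ↔ b * a ≤ 0 := (residuation b a 0).symm

theorem neg_neg_eq (a : α) : neg (neg a) = a := involutive a

instance : MulLeftMono α :=
  ⟨fun c _ b h => (residuation c _ (c * b)).2 (h.trans ((residuation c b _).1 le_rfl))⟩

theorem inf_le_mul_s4 (a b : α) : a ⊓ b ≤ a * b :=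
  calc a ⊓ b = (a ⊓ b) * (a ⊓ b) := (idem _).symm
    _ ≤ a * b := mul_le_mul' inf_le_left inf_le_right

theorem mul_neg_le_zero (a : α) : a * neg a ≤ 0 := le_neg_iff_mul_le_zero_s4.1 le_rfl

theorem le_neg_comm : a ≤ neg b ↔ b ≤ neg a := by
  rw [le_neg_iff_mul_le_zero_s4, le_neg_iff_mul_le_zero_s4, mul_comm]

theorem neg_le_neg (h : a ≤ b) : neg b ≤ neg a :=
  le_neg_comm.1 (by rwa [neg_neg_eq])

theorem neg_sup (a b : α) : neg (a ⊔ b) = neg a ⊓ neg b :=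
  le_antisymm (le_inf (neg_le_neg le_sup_left) (neg_le_neg le_sup_right))
    (le_neg_comm.1 (sup_le (le_neg_comm.1 inf_le_left) (le_neg_comm.1 inf_le_right)))

theorem neg_zx (x : α) : neg (zx x) = ox x := by
  rw [← neg_neg_eq (ox x), ox, neg_sup, neg_neg_eq, zx, inf_comm]

theorem zx_le_zero (x : α) : zx x ≤ 0 :=
  (inf_le_mul_s4 x (neg x)).trans (mul_neg_le_zero x)

theorem mul_zero_le (a : α) : a * 0 ≤ a := by
  conv_rhs => rw [← neg_neg_eq a]
  refine le_neg_iff_mul_le_zero_s4.2 ?_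
  calc neg a * (a * 0) = a * neg a * 0 := by rw [← mul_assoc, mul_comm (neg a)]
    _ ≤ 0 * 0 := mul_le_mul' (mul_neg_le_zero a) le_rfl
    _ = 0 := idem 0

theorem mul_le_self_iff_neg_mul_le_neg : a * b ≤ a ↔ neg a * b ≤ neg a := by
  conv_lhs => rw [← neg_neg_eq a]
  rw [le_neg_iff_mul_le_zero_s4, le_neg_iff_mul_le_zero_s4, mul_left_comm, neg_neg_eq]

theorem mleq_of_le_of_mul_le (hab : a ≤ b) (h : a * b ≤ a) : mleq a b :=
  le_antisymm h (by simpa [inf_eq_left.2 hab] using inf_le_mul_s4 a b)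

theorem le_neg_of_mleq_of_le_zero (ha : a ≤ 0) (h : mleq a b) : a ≤ neg b :=
  le_neg_iff_mul_le_zero_s4.2 (by rwa [mul_comm, h])

theorem mleq_neg_of_mleq_of_le_zero (ha : a ≤ 0) (h : mleq a b) : mleq a (neg b) := by
  refine mleq_of_le_of_mul_le (le_neg_of_mleq_of_le_zero ha h) ?_
  calc a * neg b = a * (b * neg b) := by rw [← mul_assoc, h]
    _ ≤ a * 0 := mul_le_mul' le_rfl (mul_neg_le_zero b)
    _ ≤ a := mul_zero_le a

theorem mleq_neg_left_of_neg_le (h : mleq a b) (hb : neg a ≤ b) : mleq (neg a) b :=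
  mleq_of_le_of_mul_le hb (mul_le_self_iff_neg_mul_le_neg.1 h.le)

end CIdInRL

open CIdInRL in
theorem stmt4 {α : Type*} [CIdInRL α] (x y : α)
    (hy : mleq (zx x) y ∧ mleq y (ox x)) :
    mleq (zx x) (neg y) ∧ mleq (neg y) (ox x) := by
  obtain ⟨hzy, hyo⟩ := hy
  have hzny : mleq (zx x) (neg y) := mleq_neg_of_mleq_of_le_zero (zx_le_zero x) hzy
  have hnyo : neg y ≤ ox x :=
    neg_zx x ▸ le_neg_comm.1 (le_neg_of_mleq_of_le_zero (zx_le_zero x) hzny)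
  exact ⟨hzny, mleq_neg_left_of_neg_le hyo hnyo⟩
end
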